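/- Jackson-integral representation of F_{N,M}: let q, x_1,…,x_M, a_1,…,a_M, b_1,…,b_N, w_1,…,w_N be complex numbers with |q| < 1, |x_i| < 1, |w_j| < 1 for all i,j (here w_j plays the role of q^{γ_j}). Assume (b_j w_j;q)_n ≠ 0 and (a_i x_i;q)_n ≠ 0 for all i, j and all n ∈ ℕ, that (x_i q^k;q)_∞ ≠ 0 for all i and all k ∈ ℕ, that (b_j q^k;q)_∞ ≠ 0 and (w_j;q)_∞ ≠ 0 for all j and k ∈ ℕ, and that the family (m,n) ∈ ℕ^M × ℕ^N ↦ ∏_{i=1}^M ((a_i;q)_{m_i}/(q;q)_{m_i}) x_i^{m_i} · ∏_{j=1}^N ((b_j;q)_{n_j}/(q;q)_{n_j}) w_j^{n_j} · q^{|m||n|} is absolutely summable. Then F_{N,M}({w_j},{a_i};{b_j w_j};{x_i}) = ∏_{j=1}^N [ (w_j;q)_∞ (b_j;q)_∞ / ((b_j w_j;q)_∞ (q;q)_∞) ] · ∑_{n ∈ ℕ^N} ∏_{i=1}^M ( (a_i x_i q^{|n|};q)_∞ / (x_i q^{|n|};q)_∞ ) · ∏_{j=1}^N ( (q^{n_j+1};q)_∞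 / (b_j q^{n_j};q)_∞ ) · ∏_{j=1}^N w_j^{n_j}, the latter sum being the multiple Jackson integral ∏_{j=1}^N ∫_0^1 d_q t_j of ∏_{i=1}^M ((a_i x_i t_1⋯t_N;q)_∞/(x_i t_1⋯t_N;q)_∞) ∏_{j=1}^N ((q t_j;q)_∞/(b_j t_j;q)_∞) t_j^{γ_j−1}/(1−q). -/

import Mathlib

open scoped BigOperators

noncomputable def qPoch (q a : ℂ) (n : ℕ) : ℂ :=
  ∏ k ∈ Finset.range n, (1 - q ^ k * a)

noncomputable def qPochInf (q a : ℂ) : ℂ :=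
  ∏' k : ℕ, (1 - q ^ k * a)

/-- The generalized `q`-hypergeometric series `F_{N,M}` with upper parameters `a`,
`b`-type parameters `b`, lower parameters `c` and variables `y`. -/
noncomputable def qHyperF (q : ℂ) {N M : ℕ} (a : Fin N → ℂ) (b : Fin M → ℂ)
    (c : Fin N → ℂ) (y : Fin M → ℂ) : ℂ :=
  ∑' m : Fin M → ℕ,
    (∏ j, qPoch q (a j) (∑ i, m i) / qPoch q (c j) (∑ i, m i)) *
      (∏ i, qPoch q (b i) (m i) / qPoch q q (m i)) * ∏ i, y i ^ m i

/-! Write `s = m₁ + ⋯ + m_M`. By the `q`-binomial theorem,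
`(w;q)_s / (bw;q)_s = (w;q)_∞ / (bw;q)_∞ · ∑ₙ (b;q)ₙ / (q;q)ₙ · (w qˢ)ⁿ`, which turns `F_{N,M}`
into an absolutely convergent double series over `(m, n)`. Exchanging the summations, the inner
sum over `m` is again a product of `q`-binomial series, now in the variables `xᵢ q^{|n|}`, and
`(b;q)ₙ / (q;q)ₙ = (b;q)_∞ (q^{n+1};q)_∞ / ((q;q)_∞ (bqⁿ;q)_∞)`.

The `q`-binomial theorem `(z;q)_∞ ∑ₘ (a;q)ₘ / (q;q)ₘ zᵐ = (az;q)_∞` itself follows by iterating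
the functional equation `(1 - z) φ(z) = (1 - az) φ(qz)` and letting `φ(qⁿz) → φ(0) = 1`. -/

open Filter Topology

section QPochhammer

variable {q : ℂ}

lemma qPoch_succ (q c : ℂ) (n : ℕ) : qPoch q c (n + 1) = qPoch q c n * (1 - q ^ n * c) :=
  Finset.prod_range_succ _ _

lemma norm_mul_pow_le (hq : ‖q‖ ≤ 1) (z : ℂ) (n : ℕ) : ‖z * q ^ n‖ ≤ ‖z‖ := by
  rw [norm_mul, norm_pow]
  exact mul_le_of_le_one_right (norm_nonneg z) (pow_le_one₀ (norm_nonneg q) hq)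

lemma summable_norm_pow_mul (hq : ‖q‖ < 1) (c : ℂ) : Summable fun k : ℕ => ‖q ^ k * c‖ := by
  simpa [norm_mul, norm_pow] using (summable_geometric_of_lt_one (norm_nonneg q) hq).mul_right ‖c‖

lemma multipliable_one_sub_pow_mul (hq : ‖q‖ < 1) (c : ℂ) :
    Multipliable fun k : ℕ => 1 - q ^ k * c := by
  simpa [sub_eq_add_neg] using multipliable_one_add_of_summable (f := fun k => -(q ^ k * c))
    (by simpa using summable_norm_pow_mul hq c)

lemma tendsto_qPoch_qPochInf (hq : ‖q‖ < 1) (c : ℂ) :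
    Tendsto (qPoch q c) atTop (𝓝 (qPochInf q c)) :=
  (multipliable_one_sub_pow_mul hq c).hasProd.tendsto_prod_nat

lemma qPoch_mul_qPochInf (hq : ‖q‖ < 1) (c : ℂ) (n : ℕ) :
    qPoch q c n * qPochInf q (c * q ^ n) = qPochInf q c := by
  have hshift : ∀ k : ℕ, 1 - q ^ k * (c * q ^ n) = 1 - q ^ (k + n) * c := fun k => by ring
  have hm : Multipliable fun k : ℕ => 1 - q ^ (k + n) * c :=
    (multipliable_one_sub_pow_mul hq (c * q ^ n)).congr hshift
  rw [qPoch, qPochInf, qPochInf, tprod_congr hshift]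
  exact Multipliable.prod_mul_tprod_nat_mul' (f := fun k => 1 - q ^ k * c) hm

lemma qPochInf_ne_zero (hq : ‖q‖ < 1) {c : ℂ} (hc : ∀ k : ℕ, 1 - q ^ k * c ≠ 0) :
    qPochInf q c ≠ 0 := by
  simpa [qPochInf, sub_eq_add_neg] using
    tprod_one_add_ne_zero_of_summable (by simpa [sub_eq_add_neg] using hc)
      (by simpa using summable_norm_pow_mul hq c)

lemma qPochInf_ne_zero_of_qPoch_ne_zero (hq : ‖q‖ < 1) {c : ℂ} (hc : ∀ n, qPoch q c n ≠ 0) :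
    qPochInf q c ≠ 0 :=
  qPochInf_ne_zero hq fun k => right_ne_zero_of_mul (qPoch_succ q c k ▸ hc (k + 1))

lemma qPochInf_self_ne_zero (hq : ‖q‖ < 1) : qPochInf q q ≠ 0 := by
  refine qPochInf_ne_zero hq fun k h => ?_
  have hpow : q ^ (k + 1) = 1 := by rw [pow_succ]; linear_combination -h
  exact (pow_lt_one₀ (norm_nonneg q) hq k.succ_ne_zero).ne (by simpa using congrArg norm hpow)

lemma qPochInf_mul_pow_ne_zero (hq : ‖q‖ < 1) {c : ℂ} (hc : qPochInf q c ≠ 0) (n : ℕ) :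
    qPochInf q (c * q ^ n) ≠ 0 :=
  right_ne_zero_of_mul ((qPoch_mul_qPochInf hq c n).symm ▸ hc)

lemma qPoch_ne_zero_of_qPochInf_ne_zero (hq : ‖q‖ < 1) {c : ℂ} (hc : qPochInf q c ≠ 0) (n : ℕ) :
    qPoch q c n ≠ 0 :=
  left_ne_zero_of_mul ((qPoch_mul_qPochInf hq c n).symm ▸ hc)

lemma qPoch_self_ne_zero (hq : ‖q‖ < 1) (n : ℕ) : qPoch q q n ≠ 0 :=
  qPoch_ne_zero_of_qPochInf_ne_zero hq (qPochInf_self_ne_zero hq) n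

lemma exists_norm_qPoch_div_qPoch_self_le (hq : ‖q‖ < 1) (a : ℂ) :
    ∃ C, ∀ m, ‖qPoch q a m / qPoch q q m‖ ≤ C := by
  have h := (tendsto_qPoch_qPochInf hq a).div (tendsto_qPoch_qPochInf hq q)
    (qPochInf_self_ne_zero hq)
  obtain ⟨C, hC⟩ := isBounded_iff_forall_norm_le.1 (Metric.isBounded_range_of_tendsto _ h)
  exact ⟨C, fun m => hC _ ⟨m, rfl⟩⟩

end QPochhammer

section QBinomial

variable {q : ℂ}

noncomputable def qBinomialTerm (q a z : ℂ) (m : ℕ) : ℂ :=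
  qPoch q a m / qPoch q q m * z ^ m

noncomputable def qBinomialSeries (q a z : ℂ) : ℂ :=
  ∑' m, qBinomialTerm q a z m

lemma exists_norm_qBinomialTerm_le (hq : ‖q‖ < 1) (a : ℂ) :
    ∃ C, ∀ z m, ‖qBinomialTerm q a z m‖ ≤ C * ‖z‖ ^ m := by
  obtain ⟨C, hC⟩ := exists_norm_qPoch_div_qPoch_self_le hq a
  refine ⟨C, fun z m => ?_⟩
  rw [qBinomialTerm, norm_mul, norm_pow]
  exact mul_le_mul_of_nonneg_right (hC m) (by positivity)

lemma summable_norm_qBinomialTerm (hq : ‖q‖ < 1) (a : ℂ) {z : ℂ} (hz : ‖z‖ < 1) :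
    Summable fun m => ‖qBinomialTerm q a z m‖ := by
  obtain ⟨C, hC⟩ := exists_norm_qBinomialTerm_le hq a
  exact .of_nonneg_of_le (fun _ => norm_nonneg _) (hC z)
    ((summable_geometric_of_lt_one (norm_nonneg z) hz).mul_left C)

lemma qBinomialTerm_mul (q a z c : ℂ) (m : ℕ) :
    qBinomialTerm q a (z * c) m = qBinomialTerm q a z m * c ^ m := by
  rw [qBinomialTerm, qBinomialTerm, mul_pow]; ring

lemma hasSum_qBinomialSeries (hq : ‖q‖ < 1) (a : ℂ) {z : ℂ} (hz : ‖z‖ < 1) :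
    HasSum (qBinomialTerm q a z) (qBinomialSeries q a z) :=
  (summable_norm_qBinomialTerm hq a hz).of_norm.hasSum

lemma one_sub_mul_qBinomialTerm_succ (hq : ‖q‖ < 1) (a z : ℂ) (m : ℕ) :
    (1 - q ^ (m + 1)) * qBinomialTerm q a z (m + 1)
      = z * ((1 - q ^ m * a) * qBinomialTerm q a z m) := by
  have hm := qPoch_self_ne_zero hq m
  have hfactor : 1 - q ^ m * q ≠ 0 := right_ne_zero_of_mul
    (qPoch_succ q q m ▸ qPoch_self_ne_zero hq (m + 1))
  rw [qBinomialTerm, qBinomialTerm, qPoch_succ, qPoch_succ, pow_succ]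
  field_simp
  ring

lemma qBinomialSeries_zero (q a : ℂ) : qBinomialSeries q a 0 = 1 := by
  rw [qBinomialSeries, tsum_eq_single 0 fun m hm => by simp [qBinomialTerm, hm]]
  simp [qBinomialTerm, qPoch]

-- Shifting the index, `∑ (1 - q ^ m) t m = z ∑ (1 - q ^ m a) t m` by
-- `one_sub_mul_qBinomialTerm_succ`, since the term `m = 0` vanishes.
lemma one_sub_mul_qBinomialSeries (hq : ‖q‖ < 1) (a : ℂ) {z : ℂ} (hz : ‖z‖ < 1) :
    (1 - z) * qBinomialSeries q a z = (1 - a * z) * qBinomialSeries q a (z * q) := by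
  have hzq : ‖z * q‖ < 1 := lt_of_le_of_lt (by simpa using norm_mul_pow_le hq.le z 1) hz
  have hS := hasSum_qBinomialSeries hq a hz
  have hSq : HasSum (fun m => qBinomialTerm q a z m * q ^ m) (qBinomialSeries q a (z * q)) :=
    (hasSum_qBinomialSeries hq a hzq).congr_fun fun m => (qBinomialTerm_mul q a z q m).symm
  have hdiff : HasSum (fun m => (1 - q ^ m) * qBinomialTerm q a z m)
      (qBinomialSeries q a z - qBinomialSeries q a (z * q)) :=
    (hS.sub hSq).congr_fun fun m => by ring
  have hshift : HasSum (fun m => (1 - q ^ (m + 1)) * qBinomialTerm q a z (m + 1))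
      (z * (qBinomialSeries q a z - a * qBinomialSeries q a (z * q))) := by
    simp_rw [one_sub_mul_qBinomialTerm_succ hq]
    exact ((hS.sub (hSq.mul_left a)).mul_left z).congr_fun fun m => by ring
  have := hdiff.unique ((hasSum_nat_add_iff 1).1 hshift)
  simp only [Finset.sum_range_one, pow_zero, sub_self, zero_mul, add_zero] at this
  linear_combination this

lemma qPoch_mul_qBinomialSeries (hq : ‖q‖ < 1) (a : ℂ) {z : ℂ} (hz : ‖z‖ < 1) (n : ℕ) :
    qPoch q z n * qBinomialSeries q a z = qPoch q (a * z) n * qBinomialSeries q a (z * q ^ n) := by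
  induction n with
  | zero => simp [qPoch]
  | succ n ih =>
    have hzn : ‖z * q ^ n‖ < 1 := (norm_mul_pow_le hq.le z n).trans_lt hz
    calc qPoch q z (n + 1) * qBinomialSeries q a z
        = qPoch q (a * z) n * ((1 - z * q ^ n) * qBinomialSeries q a (z * q ^ n)) := by
          rw [qPoch_succ, mul_right_comm, ih]; ring
      _ = qPoch q (a * z) (n + 1) * qBinomialSeries q a (z * q ^ (n + 1)) := by
          rw [one_sub_mul_qBinomialSeries hq a hzn, qPoch_succ, pow_succ, mul_assoc z]; ring

lemma tendsto_qBinomialSeries_mul_pow (hq : ‖q‖ < 1) (a : ℂ) {z : ℂ} (hz : ‖z‖ < 1) :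
    Tendsto (fun n => qBinomialSeries q a (z * q ^ n)) atTop (𝓝 1) := by
  obtain ⟨C, hC⟩ := exists_norm_qBinomialTerm_le hq a
  have hC0 : 0 ≤ C := by simpa using (norm_nonneg _).trans (hC 0 0)
  have hzq : Tendsto (fun n => z * q ^ n) atTop (𝓝 0) := by
    simpa using (tendsto_pow_atTop_nhds_zero_of_norm_lt_one hq).const_mul z
  rw [← qBinomialSeries_zero q a]
  refine tendsto_tsum_of_dominated_convergence
    ((summable_geometric_of_lt_one (norm_nonneg z) hz).mul_left C) (fun m => ?_)
    (.of_forall fun n m => (hC _ m).trans ?_)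
  · have hcont : Continuous fun u => qBinomialTerm q a u m := by unfold qBinomialTerm; fun_prop
    exact (hcont.tendsto 0).comp hzq
  · gcongr
    exact norm_mul_pow_le hq.le z n

/-- The `q`-binomial theorem. -/
theorem qPochInf_mul_qBinomialSeries (hq : ‖q‖ < 1) (a : ℂ) {z : ℂ} (hz : ‖z‖ < 1) :
    qPochInf q z * qBinomialSeries q a z = qPochInf q (a * z) := by
  have hleft := (tendsto_qPoch_qPochInf hq z).mul_const (qBinomialSeries q a z)
  have hright := (tendsto_qPoch_qPochInf hq (a * z)).mul (tendsto_qBinomialSeries_mul_pow hq a hz)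
  simpa using tendsto_nhds_unique
    (hleft.congr fun n => qPoch_mul_qBinomialSeries hq a hz n) hright

theorem qBinomialSeries_eq_div (hq : ‖q‖ < 1) (a : ℂ) {z : ℂ} (hz : ‖z‖ < 1)
    (h : qPochInf q z ≠ 0) : qBinomialSeries q a z = qPochInf q (a * z) / qPochInf q z := by
  rw [eq_div_iff h, mul_comm, qPochInf_mul_qBinomialSeries hq a hz]

end QBinomial

section FinitePi

variable {β : Type*}

lemma prod_consEquiv {α : Type*} [CommMonoid α] {N : ℕ} (f : Fin (N + 1) → β → α)
    (p : β × (Fin N → β)) :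
    ∏ j, f j (Fin.consEquiv (fun _ => β) p j) = f 0 p.1 * ∏ j : Fin N, f j.succ (p.2 j) := by
  simp [Fin.prod_univ_succ, Fin.consEquiv]

lemma summable_norm_prod_pi {R : Type*} [NormedCommRing R] {N : ℕ} {f : Fin N → β → R}
    (hf : ∀ j, Summable fun n => ‖f j n‖) :
    Summable fun n : Fin N → β => ‖∏ j, f j (n j)‖ := by
  induction N with
  | zero => exact .of_finite
  | succ N ih =>
    rw [← (Fin.consEquiv fun _ => β).summable_iff]
    exact ((hf 0).mul_norm (ih fun j => hf j.succ)).congr fun p => by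
      simp only [Function.comp_apply, prod_consEquiv]

lemma prod_tsum_eq_tsum_pi {R : Type*} [NormedCommRing R] [CompleteSpace R] {N : ℕ}
    {f : Fin N → β → R} (hf : ∀ j, Summable fun n => ‖f j n‖) :
    ∏ j, ∑' n, f j n = ∑' n : Fin N → β, ∏ j, f j (n j) := by
  induction N with
  | zero => simp
  | succ N ih =>
    rw [Fin.prod_univ_succ, ih fun j => hf j.succ,
      tsum_mul_tsum_of_summable_norm (hf 0) (summable_norm_prod_pi fun j => hf j.succ),
      ← (Fin.consEquiv fun _ => β).tsum_eq]
    exact tsum_congr fun p => (prod_consEquiv f p).symm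

end FinitePi

section JacksonIntegral

variable {M N : ℕ} {q : ℂ}

lemma prod_qBinomialSeries_eq_tsum (hq : ‖q‖ < 1) (a x : Fin M → ℂ) (hx : ∀ i, ‖x i‖ < 1)
    (s : ℕ) :
    ∏ i, qBinomialSeries q (a i) (x i * q ^ s)
      = ∑' m : Fin M → ℕ, (∏ i, qBinomialTerm q (a i) (x i) (m i)) * q ^ (s * ∑ i, m i) := by
  simp only [qBinomialSeries]
  rw [prod_tsum_eq_tsum_pi fun i => summable_norm_qBinomialTerm hq (a i)
    ((norm_mul_pow_le hq.le (x i) s).trans_lt (hx i))]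
  refine tsum_congr fun m => ?_
  simp only [qBinomialTerm_mul]
  rw [Finset.prod_mul_distrib, Finset.prod_pow_eq_pow_sum, ← pow_mul]

lemma qPoch_div_qPoch_eq_mul_qBinomialSeries (hq : ‖q‖ < 1) {w b : ℂ} (hw : ‖w‖ < 1)
    (hwinf : qPochInf q w ≠ 0) (hbw : qPochInf q (b * w) ≠ 0) (s : ℕ) :
    qPoch q w s / qPoch q (b * w) s
      = qPochInf q w / qPochInf q (b * w) * qBinomialSeries q b (w * q ^ s) := by
  have hws := qPochInf_mul_pow_ne_zero hq hwinf s
  have hbws := qPochInf_mul_pow_ne_zero hq hbw s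
  have hbw_s := qPoch_ne_zero_of_qPochInf_ne_zero hq hbw s
  rw [qBinomialSeries_eq_div hq b ((norm_mul_pow_le hq.le w s).trans_lt hw) hws,
    ← qPoch_mul_qPochInf hq w s, ← qPoch_mul_qPochInf hq (b * w) s, ← mul_assoc b]
  field_simp

lemma qPoch_div_qPoch_self_eq (hq : ‖q‖ < 1) {b : ℂ} {n : ℕ} (hb : qPochInf q (b * q ^ n) ≠ 0) :
    qPoch q b n / qPoch q q n
      = qPochInf q b / qPochInf q q * (qPochInf q (q ^ (n + 1)) / qPochInf q (b * q ^ n)) := by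
  have hqn : qPochInf q (q ^ n * q) ≠ 0 :=
    mul_comm q (q ^ n) ▸ qPochInf_mul_pow_ne_zero hq (qPochInf_self_ne_zero hq) n
  have hqn' := qPoch_self_ne_zero hq n
  rw [pow_succ', ← qPoch_mul_qPochInf hq b n, ← qPoch_mul_qPochInf hq q n]
  field_simp

noncomputable def qDoubleTerm (q : ℂ) (x a : Fin M → ℂ) (w b : Fin N → ℂ)
    (m : Fin M → ℕ) (n : Fin N → ℕ) : ℂ :=
  (∏ i, qBinomialTerm q (a i) (x i) (m i)) * (∏ j, qBinomialTerm q (b j) (w j) (n j)) *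
    q ^ ((∑ i, m i) * ∑ j, n j)

variable {x a : Fin M → ℂ} {w b : Fin N → ℂ}

lemma qHyperF_summand_eq_tsum_qDoubleTerm (hq : ‖q‖ < 1) (hw : ∀ j, ‖w j‖ < 1)
    (hwinf : ∀ j, qPochInf q (w j) ≠ 0) (hbw : ∀ j, qPochInf q (b j * w j) ≠ 0)
    (m : Fin M → ℕ) :
    (∏ j, qPoch q (w j) (∑ i, m i) / qPoch q (b j * w j) (∑ i, m i)) *
        (∏ i, qPoch q (a i) (m i) / qPoch q q (m i)) * ∏ i, x i ^ m i
      = (∏ j, qPochInf q (w j) / qPochInf q (b j * w j)) *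
          ∑' n, qDoubleTerm q x a w b m n := by
  rw [Finset.prod_congr rfl fun j _ =>
      qPoch_div_qPoch_eq_mul_qBinomialSeries hq (hw j) (hwinf j) (hbw j) _,
    Finset.prod_mul_distrib, prod_qBinomialSeries_eq_tsum hq b w hw, mul_assoc, mul_assoc,
    ← tsum_mul_right]
  congr 1
  refine tsum_congr fun n => ?_
  simp only [qDoubleTerm, qBinomialTerm, Finset.prod_mul_distrib]
  ring

lemma tsum_qDoubleTerm_eq (hq : ‖q‖ < 1) (hx : ∀ i, ‖x i‖ < 1)
    (hxinf : ∀ i, ∀ k : ℕ, qPochInf q (x i * q ^ k) ≠ 0)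
    (hbinf : ∀ j, ∀ k : ℕ, qPochInf q (b j * q ^ k) ≠ 0) (n : Fin N → ℕ) :
    ∑' m, qDoubleTerm q x a w b m n
      = (∏ j, qPochInf q (b j) / qPochInf q q) *
          ((∏ i, qPochInf q (a i * x i * q ^ (∑ j, n j)) / qPochInf q (x i * q ^ (∑ j, n j))) *
            (∏ j, qPochInf q (q ^ (n j + 1)) / qPochInf q (b j * q ^ (n j))) *
            ∏ j, w j ^ n j) := by
  have hsplit : ∀ m, qDoubleTerm q x a w b m n
      = (∏ j, qBinomialTerm q (b j) (w j) (n j)) *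
          ((∏ i, qBinomialTerm q (a i) (x i) (m i)) * q ^ ((∑ j, n j) * ∑ i, m i)) :=
    fun m => by rw [qDoubleTerm, mul_comm (∑ i, m i)]; ring
  rw [tsum_congr hsplit, tsum_mul_left, ← prod_qBinomialSeries_eq_tsum hq a x hx,
    Finset.prod_congr rfl fun i _ => qBinomialSeries_eq_div hq (a i)
      ((norm_mul_pow_le hq.le (x i) _).trans_lt (hx i)) (hxinf i _)]
  simp only [qBinomialTerm, Finset.prod_mul_distrib]
  rw [Finset.prod_congr rfl fun j _ => qPoch_div_qPoch_self_eq hq (hbinf j (n j)),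
    Finset.prod_mul_distrib]
  simp only [mul_assoc]
  ring

end JacksonIntegral

theorem statement3_general (M N : ℕ) (q : ℂ) (x a : Fin M → ℂ) (w b : Fin N → ℂ)
    (hq : ‖q‖ < 1)
    (hx : ∀ i, ‖x i‖ < 1) (hw : ∀ j, ‖w j‖ < 1)
    (hbw : ∀ j n, qPoch q (b j * w j) n ≠ 0)
    (hxinf : ∀ i, ∀ k : ℕ, qPochInf q (x i * q ^ k) ≠ 0)
    (hbinf : ∀ j, ∀ k : ℕ, qPochInf q (b j * q ^ k) ≠ 0)
    (hwinf : ∀ j, qPochInf q (w j) ≠ 0)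
    (hsum : Summable (fun p : (Fin M → ℕ) × (Fin N → ℕ) =>
      ‖(∏ i, qPoch q (a i) (p.1 i) / qPoch q q (p.1 i) * x i ^ p.1 i) *
        (∏ j, qPoch q (b j) (p.2 j) / qPoch q q (p.2 j) * w j ^ p.2 j) *
        q ^ ((∑ i, p.1 i) * (∑ j, p.2 j))‖)) :
    qHyperF q w a (fun j => b j * w j) x
      = (∏ j, qPochInf q (w j) * qPochInf q (b j) /
            (qPochInf q (b j * w j) * qPochInf q q)) *
        ∑' n : Fin N → ℕ,
          (∏ i, qPochInf q (a i * x i * q ^ (∑ j, n j)) /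
              qPochInf q (x i * q ^ (∑ j, n j))) *
            (∏ j, qPochInf q (q ^ (n j + 1)) / qPochInf q (b j * q ^ (n j))) *
            ∏ j, w j ^ n j := by
  have hbw' j : qPochInf q (b j * w j) ≠ 0 := qPochInf_ne_zero_of_qPoch_ne_zero hq (hbw j)
  have hT : Summable (Function.uncurry (qDoubleTerm q x a w b)) := hsum.of_norm
  calc qHyperF q w a (fun j => b j * w j) x
      = ∑' m, (∏ j, qPochInf q (w j) / qPochInf q (b j * w j)) *
          ∑' n, qDoubleTerm q x a w b m n :=
        tsum_congr fun m => qHyperF_summand_eq_tsum_qDoubleTerm hq hw hwinf hbw' m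
    _ = (∏ j, qPochInf q (w j) / qPochInf q (b j * w j)) *
          ∑' n, ∑' m, qDoubleTerm q x a w b m n := by
        rw [tsum_mul_left, hT.tsum_comm]
    _ = _ := by
        rw [tsum_congr (tsum_qDoubleTerm_eq hq hx hxinf hbinf), tsum_mul_left, ← mul_assoc,
          ← Finset.prod_mul_distrib]
        simp_rw [div_mul_div_comm]

theorem statement3 (M N : ℕ) (q : ℂ) (x a : Fin M → ℂ) (w b : Fin N → ℂ)
    (hq : ‖q‖ < 1)
    (hx : ∀ i, ‖x i‖ < 1) (hw : ∀ j, ‖w j‖ < 1)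
    (hbw : ∀ j n, qPoch q (b j * w j) n ≠ 0)
    (hax : ∀ i n, qPoch q (a i * x i) n ≠ 0)
    (hxinf : ∀ i, ∀ k : ℕ, qPochInf q (x i * q ^ k) ≠ 0)
    (hbinf : ∀ j, ∀ k : ℕ, qPochInf q (b j * q ^ k) ≠ 0)
    (hwinf : ∀ j, qPochInf q (w j) ≠ 0)
    (hsum : Summable (fun p : (Fin M → ℕ) × (Fin N → ℕ) =>
      ‖(∏ i, qPoch q (a i) (p.1 i) / qPoch q q (p.1 i) * x i ^ p.1 i) *
        (∏ j, qPoch q (b j) (p.2 j) / qPoch q q (p.2 j) * w j ^ p.2 j) *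
        q ^ ((∑ i, p.1 i) * (∑ j, p.2 j))‖)) :
    qHyperF q w a (fun j => b j * w j) x
      = (∏ j, qPochInf q (w j) * qPochInf q (b j) /
            (qPochInf q (b j * w j) * qPochInf q q)) *
        ∑' n : Fin N → ℕ,
          (∏ i, qPochInf q (a i * x i * q ^ (∑ j, n j)) /
              qPochInf q (x i * q ^ (∑ j, n j))) *
            (∏ j, qPochInf q (q ^ (n j + 1)) / qPochInf q (b j * q ^ (n j))) *
            ∏ j, w j ^ n j :=
  statement3_general M N q x a w b hq hx hw hbw hxinf hbinf hwinf hsum
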